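/- Fix an integer a ≥ 2. For every integer m with 0 < m < a, the boundaries of the locking zone of m satisfy ν^+(m) = m + 1/a and ν^−(m) = m − 1 + a/(a + 1) (that is, ν^−(m) = m − 1 + 1/(1 + 1/a), the value of the continued fraction [m − 1; 1, a]). Moreover ν^+(0) = 1/a. -/
import Mathlib


/-- One step of the Gauss continued-fraction algorithm (returns `0` upon termination). -/
noncomputable def cfStep (y : ℝ) : ℝ := if Int.fract y = 0 then 0 else (Int.fract y)⁻¹

/-- Iterates of the Gauss map used to compute the canonical continued fraction of `x`. -/
noncomputable def cfIter (x : ℝ) : ℕ → ℝ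
  | 0 => x
  | n + 1 => cfStep (cfIter x n)

/-- The `n`-th partial quotient of the canonical continued fraction expansion of `x`
(by convention it is `0` past the end of a finite expansion). -/
noncomputable def pquot (x : ℝ) (n : ℕ) : ℤ := ⌊cfIter x n⌋

/-- Value of a finite continued fraction `[a₀; a₁, …, aₙ]`. -/
noncomputable def cfEval : List ℤ → ℝ
  | [] => 0
  | [a] => (a : ℝ)
  | a :: l => (a : ℝ) + (cfEval l)⁻¹

/-- The canonical continued fraction expansion of `x` is exactly `[A 0; A 1, …, A n]`. -/
def IsCanonCF (x : ℝ) (A : ℕ → ℤ) (n : ℕ) : Prop :=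
  (∀ i ≤ n, pquot x i = A i) ∧ Int.fract (cfIter x n) = 0 ∧ ∀ i < n, Int.fract (cfIter x i) ≠ 0

/-- The `n`-th convergent `pₙ/qₙ = [x₀; x₁, …, xₙ]` of `x`. -/
noncomputable def cfConv (x : ℝ) (n : ℕ) : ℝ := cfEval ((List.range (n + 1)).map (pquot x))

open scoped Classical in
/-- The resolution map `r_a`: truncate the canonical continued fraction expansion just
before the first partial quotient `xᵢ` (`i ≥ 1`) with `xᵢ ≥ a`; identity otherwise. -/
noncomputable def ra (a : ℕ) (x : ℝ) : ℝ :=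
  if h : ∃ i, 1 ≤ i ∧ (a : ℤ) ≤ pquot x i then
    cfEval ((List.range (Nat.find h)).map (pquot x))
  else x

/-- The locking zone `Z_a(r) = {x ∈ [0, a) : r_a(x) = r}`. -/
noncomputable def lockZone (a : ℕ) (r : ℝ) : Set ℝ :=
  {x | x ∈ Set.Ico (0 : ℝ) (a : ℝ) ∧ ra a x = r}

/-- Right boundary `ν⁺` of a locking zone. -/
noncomputable def nuPlus (a : ℕ) (r : ℝ) : ℝ := sSup (lockZone a r)

/-- Left boundary `ν⁻` of a locking zone. -/
noncomputable def nuMinus (a : ℕ) (r : ℝ) : ℝ := sInf (lockZone a r)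

-- ### Auxiliary lemmas ###

lemma cfIter_eq_zero {x : ℝ} {k : ℕ} (hk : Int.fract (cfIter x k) = 0) :
    ∀ n, k < n → cfIter x n = 0 := by
  intro n hn
  induction n with
  | zero => omega
  | succ n ih =>
    rcases Nat.lt_succ_iff_lt_or_eq.mp hn with h | h
    · have h0 := ih h
      simp [cfIter, cfStep, h0]
    · subst h
      simp [cfIter, cfStep, hk]

lemma fract_ne_zero {x : ℝ} {n : ℕ} (h : 1 ≤ pquot x n) :
    ∀ k, k < n → Int.fract (cfIter x k) ≠ 0 := by
  intro k hk hz
  have h0 := cfIter_eq_zero hz n hk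
  rw [pquot, h0] at h
  simp at h

lemma cfIter_succ {x : ℝ} {k : ℕ} (h : Int.fract (cfIter x k) ≠ 0) :
    cfIter x (k + 1) = (Int.fract (cfIter x k))⁻¹ := by
  simp [cfIter, cfStep, h]

lemma one_lt_cfIter_succ {x : ℝ} {k : ℕ} (h : Int.fract (cfIter x k) ≠ 0) :
    1 < cfIter x (k + 1) := by
  rw [cfIter_succ h]
  have h1 : 0 < Int.fract (cfIter x k) :=
    lt_of_le_of_ne (Int.fract_nonneg _) (Ne.symm h)
  have h2 : Int.fract (cfIter x k) < 1 := Int.fract_lt_one _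
  exact one_lt_inv_iff₀.mpr ⟨h1, h2⟩

lemma cfEval_ge_one : ∀ l : List ℤ, l ≠ [] → (∀ e ∈ l, 1 ≤ e) →
    1 ≤ cfEval l ∧ (cfEval l = 1 → l = [1]) := by
  intro l
  induction l with
  | nil => simp
  | cons b t ih =>
    intro _ hall
    have hb : 1 ≤ b := hall b (by simp)
    cases t with
    | nil =>
      refine ⟨by simp [cfEval]; exact_mod_cast hb, ?_⟩
      intro h
      simp [cfEval] at h
      have : b = 1 := by exact_mod_cast h
      simp [this]
    | cons c s =>
      have ht := ih (by simp) (fun e he => hall e (by simp [he]))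
      have hv : 1 ≤ cfEval (c :: s) := ht.1
      have hinv : 0 < (cfEval (c :: s))⁻¹ := inv_pos.mpr (by linarith)
      have hinv1 : (cfEval (c :: s))⁻¹ ≤ 1 := inv_le_one_of_one_le₀ hv
      have hb' : (1:ℝ) ≤ (b:ℝ) := by exact_mod_cast hb
      have heq : cfEval (b :: c :: s) = (b:ℝ) + (cfEval (c :: s))⁻¹ := rfl
      refine ⟨by rw [heq]; linarith, ?_⟩
      intro h
      rw [heq] at h
      exfalso; linarith

lemma cf_struct {x : ℝ} {n : ℕ} (hn : 1 ≤ n)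
    (hpos : ∀ k, 1 ≤ k → k < n → 1 ≤ pquot x k)
    {m : ℤ} (hev : cfEval ((List.range n).map (pquot x)) = (m : ℝ)) :
    (n = 1 ∧ pquot x 0 = m) ∨ (n = 2 ∧ pquot x 0 = m - 1 ∧ pquot x 1 = 1) := by
  obtain ⟨n', rfl⟩ : ∃ n', n = n' + 1 := ⟨n - 1, by omega⟩
  rw [List.range_succ_eq_map, List.map_cons, List.map_map] at hev
  cases n' with
  | zero =>
    left
    simp [cfEval] at hev
    exact ⟨rfl, by exact_mod_cast hev⟩
  | succ n'' =>
    right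
    set t := (List.range (n'' + 1)).map (pquot x ∘ Nat.succ) with ht
    have htne : t ≠ [] := by simp [ht]
    have hall : ∀ e ∈ t, 1 ≤ e := by
      intro e he
      rw [ht] at he
      simp at he
      obtain ⟨k, hk, rfl⟩ := he
      exact hpos (k + 1) (by omega) (by omega)
    have hge := cfEval_ge_one t htne hall
    have hv1 : 1 ≤ cfEval t := hge.1
    have heq : cfEval (pquot x 0 :: t) = (pquot x 0 : ℝ) + (cfEval t)⁻¹ := by
      cases ht' : t with
      | nil => exact absurd ht' htne
      | cons c s => rfl
    rw [heq] at hev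
    have hinvpos : 0 < (cfEval t)⁻¹ := inv_pos.mpr (by linarith)
    have hinvle : (cfEval t)⁻¹ ≤ 1 := inv_le_one_of_one_le₀ hv1
    have hdz : m - pquot x 0 = 1 := by
      have h1 : (0:ℤ) < m - pquot x 0 := by
        have : (0:ℝ) < (m:ℝ) - (pquot x 0 : ℝ) := by linarith
        exact_mod_cast this
      have h2 : (m : ℤ) - pquot x 0 ≤ 1 := by
        have : (m:ℝ) - (pquot x 0 : ℝ) ≤ 1 := by linarith
        exact_mod_cast this
      omega
    have hvinv : (cfEval t)⁻¹ = 1 := by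
      have hmr : (m:ℝ) - (pquot x 0 : ℝ) = 1 := by exact_mod_cast hdz
      linarith
    have hv : cfEval t = 1 := inv_eq_one.mp hvinv
    have ht1 : t = [1] := hge.2 hv
    rw [ht, List.range_succ_eq_map, List.map_cons] at ht1
    simp only [List.cons.injEq] at ht1
    obtain ⟨hp1, hrest⟩ := ht1
    have hn0 : n'' = 0 := by
      rw [List.map_eq_nil_iff, List.map_eq_nil_iff, List.range_eq_nil] at hrest
      exact hrest
    subst hn0
    refine ⟨rfl, by omega, ?_⟩
    simpa using hp1

lemma zone_bounds {a : ℕ} (ha : 2 ≤ a) {m : ℤ} {x : ℝ} (hra : ra a x = (m : ℝ)) :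
    (m : ℝ) - 1 + (a : ℝ) / ((a : ℝ) + 1) ≤ x ∧ x ≤ (m : ℝ) + 1 / (a : ℝ) := by
  have ha0 : (0:ℝ) < (a:ℝ) := by
    have : 0 < a := by omega
    exact_mod_cast this
  have hdiv1 : (a:ℝ) / ((a:ℝ) + 1) < 1 := by
    rw [div_lt_one (by linarith)]; linarith
  have h1a : 0 < 1 / (a:ℝ) := by positivity
  classical
  rw [ra] at hra
  split_ifs at hra with h
  · obtain ⟨hn1, hna⟩ := Nat.find_spec h
    have hq1 : 1 ≤ pquot x (Nat.find h) :=
      le_trans (by exact_mod_cast (show 1 ≤ a by omega)) hna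
    have hfr : ∀ k, k < Nat.find h → Int.fract (cfIter x k) ≠ 0 := fract_ne_zero hq1
    have hpos : ∀ k, 1 ≤ k → k < Nat.find h → 1 ≤ pquot x k := by
      intro k hk1 hkn
      obtain ⟨k', rfl⟩ : ∃ k', k = k' + 1 := ⟨k - 1, by omega⟩
      have h1 := one_lt_cfIter_succ (hfr k' (by omega))
      exact Int.le_floor.mpr (by exact_mod_cast h1.le)
    rcases cf_struct hn1 hpos hra with ⟨hne, hp0⟩ | ⟨hne, hp0, hp1⟩
    · rw [hne] at hna hfr
      have hf0 : Int.fract (cfIter x 0) ≠ 0 := hfr 0 one_pos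
      have hfp : 0 < Int.fract x :=
        lt_of_le_of_ne (Int.fract_nonneg _) (Ne.symm hf0)
      have hge : (a:ℝ) ≤ (Int.fract x)⁻¹ := by
        have h2 : ((a:ℤ):ℝ) ≤ cfIter x 1 := Int.le_floor.mp hna
        rw [cfIter_succ hf0] at h2
        exact_mod_cast h2
      have hfle : Int.fract x ≤ 1 / (a:ℝ) := by
        rw [le_div_iff₀ ha0]
        have := mul_le_mul_of_nonneg_right hge hfp.le
        rw [inv_mul_cancel₀ (ne_of_gt hfp)] at this
        linarith
      have hfl : ((⌊x⌋ : ℤ) : ℝ) = (m : ℝ) := by exact_mod_cast hp0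
      have hxf := Int.floor_add_fract x
      constructor
      · linarith
      · linarith
    · rw [hne] at hna hfr
      have hf0 : Int.fract (cfIter x 0) ≠ 0 := hfr 0 (by omega)
      have hf1 : Int.fract (cfIter x 1) ≠ 0 := hfr 1 (by omega)
      have hfp : 0 < Int.fract x :=
        lt_of_le_of_ne (Int.fract_nonneg _) (Ne.symm hf0)
      have hf1p : 0 < Int.fract (cfIter x 1) :=
        lt_of_le_of_ne (Int.fract_nonneg _) (Ne.symm hf1)
      have hge : (a:ℝ) ≤ (Int.fract (cfIter x 1))⁻¹ := by
        have h2 : ((a:ℤ):ℝ) ≤ cfIter x 2 := Int.le_floor.mp hna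
        rw [cfIter_succ hf1] at h2
        exact_mod_cast h2
      have hfle : Int.fract (cfIter x 1) ≤ 1 / (a:ℝ) := by
        rw [le_div_iff₀ ha0]
        have := mul_le_mul_of_nonneg_right hge hf1p.le
        rw [inv_mul_cancel₀ (ne_of_gt hf1p)] at this
        linarith
      have hfl1 : ((⌊cfIter x 1⌋ : ℤ) : ℝ) = 1 := by exact_mod_cast hp1
      have hxf1 := Int.floor_add_fract (cfIter x 1)
      have hle1 : cfIter x 1 ≤ ((a:ℝ) + 1) / (a:ℝ) := by
        rw [add_div]
        have : (a:ℝ)/(a:ℝ) = 1 := div_self (ne_of_gt ha0)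
        rw [this]
        linarith
      have hiter1 : cfIter x 1 = (Int.fract x)⁻¹ := cfIter_succ hf0
      have hfge : (a:ℝ) / ((a:ℝ) + 1) ≤ Int.fract x := by
        rw [div_le_iff₀ (by linarith)]
        have hpos1 : 0 < cfIter x 1 := by
          rw [hiter1]; exact inv_pos.mpr hfp
        have h3 : (Int.fract x)⁻¹ * (a:ℝ) ≤ (a:ℝ) + 1 := by
          have := mul_le_mul_of_nonneg_right hle1 ha0.le
          rw [div_mul_cancel₀ _ (ne_of_gt ha0)] at this
          rw [← hiter1]
          linarith
        have h4 := mul_le_mul_of_nonneg_left h3 hfp.le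
        rw [← mul_assoc, mul_inv_cancel₀ (ne_of_gt hfp), one_mul] at h4
        linarith [mul_comm (Int.fract x) ((a:ℝ) + 1)]
      have hfl : ((⌊x⌋ : ℤ) : ℝ) = (m : ℝ) - 1 := by
        rw [show ⌊x⌋ = pquot x 0 from rfl, hp0]; push_cast; ring
      have hxf := Int.floor_add_fract x
      have hflt : Int.fract x < 1 := Int.fract_lt_one x
      constructor
      · linarith
      · linarith
  · rw [← hra]
    constructor
    · linarith
    · linarith

lemma ra_right {a : ℕ} (ha : 2 ≤ a) (m : ℕ) : ra a ((m:ℝ) + 1/(a:ℝ)) = (m:ℝ) := by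
  have ha0 : (0:ℝ) < (a:ℝ) := by
    have : 0 < a := by omega
    exact_mod_cast this
  set x : ℝ := (m:ℝ) + 1/(a:ℝ) with hx
  clear_value x
  have hfa : (0:ℝ) < 1/(a:ℝ) := by positivity
  have hfa1 : 1/(a:ℝ) < 1 := by
    rw [div_lt_one ha0]
    exact_mod_cast (show 1 < a by omega)
  have hfr : Int.fract x = 1/(a:ℝ) := by
    rw [hx, show ((m:ℝ) + 1/(a:ℝ)) = ((m:ℤ):ℝ) + 1/(a:ℝ) by push_cast; ring,
      Int.fract_intCast_add]
    exact Int.fract_eq_self.mpr ⟨hfa.le, hfa1⟩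
  have hfr0 : Int.fract (cfIter x 0) ≠ 0 := by
    rw [show cfIter x 0 = x from rfl, hfr]; exact ne_of_gt hfa
  have hiter1 : cfIter x 1 = (a:ℝ) := by
    rw [cfIter_succ hfr0, show cfIter x 0 = x from rfl, hfr, one_div, inv_inv]
  have hp1 : pquot x 1 = (a:ℤ) := by
    rw [pquot, hiter1]
    exact_mod_cast Int.floor_natCast a
  have hex : ∃ i, 1 ≤ i ∧ (a:ℤ) ≤ pquot x i := ⟨1, le_refl 1, le_of_eq hp1.symm⟩
  rw [ra, dif_pos hex]
  have hfind : Nat.find hex = 1 := by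
    rw [Nat.find_eq_iff]
    refine ⟨⟨le_refl 1, le_of_eq hp1.symm⟩, ?_⟩
    intro k hk hcon
    omega
  rw [hfind]
  have hfl : ⌊x⌋ = (m:ℤ) := by
    rw [Int.floor_eq_iff]
    constructor
    · push_cast; linarith
    · push_cast; linarith
  rw [show List.range 1 = [0] from rfl]
  simp only [List.map_cons, List.map_nil]
  show ((pquot x 0 : ℤ) : ℝ) = (m:ℝ)
  rw [show pquot x 0 = ⌊x⌋ from rfl, hfl]
  norm_num

lemma ra_left {a : ℕ} (ha : 2 ≤ a) (m : ℕ) :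
    ra a ((m:ℝ) - 1 + (a:ℝ)/((a:ℝ)+1)) = (m:ℝ) := by
  have ha0 : (0:ℝ) < (a:ℝ) := by
    have : 0 < a := by omega
    exact_mod_cast this
  set x : ℝ := (m:ℝ) - 1 + (a:ℝ)/((a:ℝ)+1) with hx
  clear_value x
  have hfa : (0:ℝ) < (a:ℝ)/((a:ℝ)+1) := by positivity
  have hfa1 : (a:ℝ)/((a:ℝ)+1) < 1 := by
    rw [div_lt_one (by linarith)]; linarith
  have h1a : (0:ℝ) < 1/(a:ℝ) := by positivity
  have h1a1 : 1/(a:ℝ) < 1 := by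
    rw [div_lt_one ha0]
    exact_mod_cast (show 1 < a by omega)
  have hfr : Int.fract x = (a:ℝ)/((a:ℝ)+1) := by
    rw [hx, show ((m:ℝ) - 1 + (a:ℝ)/((a:ℝ)+1)) = (((m:ℤ) - 1 :ℤ):ℝ) + (a:ℝ)/((a:ℝ)+1)
        by push_cast; ring, Int.fract_intCast_add]
    exact Int.fract_eq_self.mpr ⟨hfa.le, hfa1⟩
  have hfr0 : Int.fract (cfIter x 0) ≠ 0 := by
    rw [show cfIter x 0 = x from rfl, hfr]; exact ne_of_gt hfa
  have hiter1 : cfIter x 1 = 1 + 1/(a:ℝ) := by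
    rw [cfIter_succ hfr0, show cfIter x 0 = x from rfl, hfr]
    rw [inv_div]
    field_simp
  have hp1 : pquot x 1 = 1 := by
    rw [pquot, hiter1, Int.floor_eq_iff]
    constructor
    · push_cast; linarith
    · push_cast; linarith
  have hfr1 : Int.fract (cfIter x 1) = 1/(a:ℝ) := by
    rw [hiter1, show (1:ℝ) + 1/(a:ℝ) = ((1:ℤ):ℝ) + 1/(a:ℝ) by norm_num,
      Int.fract_intCast_add]
    exact Int.fract_eq_self.mpr ⟨h1a.le, h1a1⟩
  have hfr1' : Int.fract (cfIter x 1) ≠ 0 := by rw [hfr1]; exact ne_of_gt h1a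
  have hiter2 : cfIter x 2 = (a:ℝ) := by
    rw [cfIter_succ hfr1', hfr1, one_div, inv_inv]
  have hp2 : pquot x 2 = (a:ℤ) := by
    rw [pquot, hiter2]
    exact_mod_cast Int.floor_natCast a
  have hex : ∃ i, 1 ≤ i ∧ (a:ℤ) ≤ pquot x i := ⟨2, by omega, le_of_eq hp2.symm⟩
  rw [ra, dif_pos hex]
  have hfind : Nat.find hex = 2 := by
    rw [Nat.find_eq_iff]
    refine ⟨⟨by omega, le_of_eq hp2.symm⟩, ?_⟩
    intro k hk hcon
    obtain ⟨hk1, hka⟩ := hcon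
    have hk' : k = 1 := by omega
    rw [hk', hp1] at hka
    omega
  rw [hfind]
  have hfl : ⌊x⌋ = (m:ℤ) - 1 := by
    rw [Int.floor_eq_iff]
    constructor
    · push_cast; linarith
    · push_cast; linarith
  rw [show List.range 2 = [0, 1] from rfl]
  simp only [List.map_cons, List.map_nil]
  show ((pquot x 0 : ℤ) : ℝ) + (cfEval [pquot x 1])⁻¹ = (m:ℝ)
  rw [show pquot x 0 = ⌊x⌋ from rfl, hfl, hp1]
  show (((m:ℤ) - 1 : ℤ) : ℝ) + (((1:ℤ):ℝ))⁻¹ = (m:ℝ)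
  push_cast
  norm_num

/-- For integers `0 < m < a`, `ν⁺(m) = m + 1/a` and
`ν⁻(m) = m - 1 + a/(a+1)`; moreover `ν⁺(0) = 1/a`. -/
theorem stmt_15 (a : ℕ) (ha : 2 ≤ a) :
    (∀ m : ℕ, 0 < m → m < a →
      nuPlus a (m : ℝ) = (m : ℝ) + 1 / (a : ℝ) ∧
      nuMinus a (m : ℝ) = (m : ℝ) - 1 + (a : ℝ) / ((a : ℝ) + 1)) ∧
    nuPlus a (0 : ℝ) = 1 / (a : ℝ) := by
  have ha0 : (0:ℝ) < (a:ℝ) := by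
    have : 0 < a := by omega
    exact_mod_cast this
  have h1a1 : 1/(a:ℝ) < 1 := by
    rw [div_lt_one ha0]
    exact_mod_cast (show 1 < a by omega)
  have h1a : (0:ℝ) < 1/(a:ℝ) := by positivity
  have hdiv0 : (0:ℝ) ≤ (a:ℝ)/((a:ℝ)+1) := by positivity
  have hdiv1 : (a:ℝ)/((a:ℝ)+1) < 1 := by
    rw [div_lt_one (by linarith)]; linarith
  constructor
  · intro m hm0 hma
    have hmr : (m:ℝ) + 1 ≤ (a:ℝ) := by exact_mod_cast hma
    have hm1 : (1:ℝ) ≤ (m:ℝ) := by exact_mod_cast hm0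
    have hub : ∀ y ∈ lockZone a (m:ℝ), y ≤ (m:ℝ) + 1/(a:ℝ) := by
      intro y hy
      have hcast : ra a y = (((m:ℤ)):ℝ) := by exact_mod_cast hy.2
      have := (zone_bounds ha hcast).2
      push_cast at this
      linarith
    have hlb : ∀ y ∈ lockZone a (m:ℝ), (m:ℝ) - 1 + (a:ℝ)/((a:ℝ)+1) ≤ y := by
      intro y hy
      have hcast : ra a y = (((m:ℤ)):ℝ) := by exact_mod_cast hy.2
      have := (zone_bounds ha hcast).1
      push_cast at this
      linarith
    have hmem_r : ((m:ℝ) + 1/(a:ℝ)) ∈ lockZone a (m:ℝ) := by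
      refine ⟨⟨by positivity, by linarith⟩, ra_right ha m⟩
    have hmem_l : ((m:ℝ) - 1 + (a:ℝ)/((a:ℝ)+1)) ∈ lockZone a (m:ℝ) := by
      refine ⟨⟨by linarith, ?_⟩, ra_left ha m⟩
      have : (m:ℝ) ≤ (a:ℝ) := by linarith
      linarith
    exact ⟨IsGreatest.csSup_eq ⟨hmem_r, hub⟩, IsLeast.csInf_eq ⟨hmem_l, hlb⟩⟩
  · have hmem : (1/(a:ℝ)) ∈ lockZone a (0:ℝ) := by
      have h2a : (2:ℝ) ≤ (a:ℝ) := by exact_mod_cast ha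
      refine ⟨⟨h1a.le, by linarith⟩, ?_⟩
      have := ra_right ha 0
      simpa using this
    have hub : ∀ y ∈ lockZone a (0:ℝ), y ≤ 1/(a:ℝ) := by
      intro y hy
      have hcast : ra a y = (((0:ℤ)):ℝ) := by
        rw [hy.2]; norm_num
      have := (zone_bounds ha hcast).2
      push_cast at this
      linarith
    exact IsGreatest.csSup_eq ⟨hmem, hub⟩
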